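/- For the inviscid Burgers' equation with smooth initial data u₀ whose derivative attains a negative value, any C¹ solution must break down (cease to exist as a C¹ function) at or before time T* = -1/min_x u₀'(x). -/

import Mathlib

/-!
Along a characteristic `t ↦ x + t u₀(x)` a `C¹` solution solves a linear ODE whose constant
solution `u₀(x)` is, by uniqueness, the only one; so `u` is constant on characteristics, which are
straight lines. Two characteristics can therefore never meet before time `T` unless they carry the
same value, i.e. `x ↦ x + T u₀(x)` is monotone. Its derivative `1 + T u₀'(x₀) = 1 - T m` at the
point where `u₀'` attains `-m` is then nonnegative.
-/

open Set

section PartialDerivatives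

variable {u : ℝ → ℝ → ℝ}

lemma hasDerivAt_partial_fst {x t : ℝ}
    (hu : DifferentiableAt ℝ (fun p : ℝ × ℝ => u p.1 p.2) (x, t)) :
    HasDerivAt (fun y => u y t) (fderiv ℝ (fun p : ℝ × ℝ => u p.1 p.2) (x, t) (1, 0)) x :=
  hu.hasFDerivAt.comp_hasDerivAt (l := fun p : ℝ × ℝ => u p.1 p.2) x
    ((hasDerivAt_id' x).prodMk (hasDerivAt_const x t))

lemma hasDerivAt_partial_snd {x t : ℝ}
    (hu : DifferentiableAt ℝ (fun p : ℝ × ℝ => u p.1 p.2) (x, t)) :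
    HasDerivAt (fun s => u x s) (fderiv ℝ (fun p : ℝ × ℝ => u p.1 p.2) (x, t) (0, 1)) t :=
  hu.hasFDerivAt.comp_hasDerivAt t ((hasDerivAt_const t x).prodMk (hasDerivAt_id' t))

lemma continuous_deriv_partial_fst (hu : ContDiff ℝ 1 (fun p : ℝ × ℝ => u p.1 p.2)) :
    Continuous fun p : ℝ × ℝ => deriv (fun y => u y p.2) p.1 := by
  have hd := hu.differentiable one_ne_zero
  have hpartial : (fun p : ℝ × ℝ => deriv (fun y => u y p.2) p.1) =
      fun p => fderiv ℝ (fun p : ℝ × ℝ => u p.1 p.2) p (1, 0) :=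
    funext fun p => (hasDerivAt_partial_fst (hd p)).deriv
  rw [hpartial]
  exact (hu.continuous_fderiv one_ne_zero).clm_apply continuous_const

lemma hasDerivAt_along_line {x₀ c t : ℝ}
    (hu : DifferentiableAt ℝ (fun p : ℝ × ℝ => u p.1 p.2) (x₀ + t * c, t)) :
    HasDerivAt (fun s => u (x₀ + s * c) s)
      (c * deriv (fun y => u y t) (x₀ + t * c) + deriv (fun s => u (x₀ + t * c) s) t) t := by
  have hline : HasDerivAt (fun s : ℝ => (x₀ + s * c, s)) (c, 1) t :=
    (((hasDerivAt_id t).mul_const c).const_add x₀ |>.congr_deriv (one_mul c)).prodMk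
      (hasDerivAt_id t)
  have hdir : ((c, 1) : ℝ × ℝ) = c • ((1, 0) : ℝ × ℝ) + (0, 1) := by simp
  rw [(hasDerivAt_partial_fst hu).deriv, (hasDerivAt_partial_snd hu).deriv,
    ← smul_eq_mul, ← map_smul, ← map_add, ← hdir]
  exact hu.hasFDerivAt.comp_hasDerivAt (l := fun p : ℝ × ℝ => u p.1 p.2)
    (f := fun s => (x₀ + s * c, s)) t hline

end PartialDerivatives

theorem eqOn_const_of_hasDerivWithinAt_sub_mul {g A : ℝ → ℝ} {a b c : ℝ}
    (hA : ContinuousOn A (Icc a b)) (hg : ContinuousOn g (Icc a b))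
    (hg' : ∀ t ∈ Ico a b, HasDerivWithinAt g ((c - g t) * A t) (Ici t) t) (ha : g a = c) :
    EqOn g (fun _ => c) (Icc a b) := by
  obtain ⟨C, hC⟩ := isCompact_Icc.exists_bound_of_continuousOn hA
  have hlip : ∀ t ∈ Ico a b, LipschitzWith C.toNNReal fun y => (c - y) * A t := by
    intro t ht
    refine LipschitzWith.of_dist_le_mul fun y z => ?_
    have hAt : |A t| ≤ C.toNNReal := (hC t (Ico_subset_Icc_self ht)).trans C.le_coe_toNNReal
    calc dist ((c - y) * A t) ((c - z) * A t) = |A t| * dist y z := by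
          rw [Real.dist_eq, Real.dist_eq, ← sub_mul, abs_mul, mul_comm, abs_sub_comm]
          ring_nf
      _ ≤ C.toNNReal * dist y z := by gcongr
  exact ODE_solution_unique_of_mem_Icc_right (s := fun _ => univ)
    (fun t ht => (hlip t ht).lipschitzOnWith) hg hg' (fun _ _ => trivial) continuousOn_const
    (fun t _ => by simpa using hasDerivWithinAt_const t (Ici t) c) (fun _ _ => trivial) ha

section Burgers

variable {u : ℝ → ℝ → ℝ} {T : ℝ}
  (hu : ContDiff ℝ 1 (fun p : ℝ × ℝ => u p.1 p.2))
  (hpde : ∀ x : ℝ, ∀ t ∈ Icc (0 : ℝ) T,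
    deriv (fun s => u x s) t + u x t * deriv (fun y => u y t) x = 0)
include hu hpde

theorem burgers_const_along_characteristic (x₀ : ℝ) :
    ∀ t ∈ Icc (0 : ℝ) T, u (x₀ + t * u x₀ 0) t = u x₀ 0 := by
  set c := u x₀ 0
  have hline : Continuous fun t : ℝ => (x₀ + t * c, t) := by fun_prop
  refine eqOn_const_of_hasDerivWithinAt_sub_mul
    (A := fun t => deriv (fun y => u y t) (x₀ + t * c))
    ((continuous_deriv_partial_fst hu).comp hline).continuousOn
    (hu.continuous.comp hline).continuousOn (fun t ht => ?_) (by simp [c])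
  refine (hasDerivAt_along_line (hu.differentiable one_ne_zero _)).hasDerivWithinAt.congr_deriv ?_
  linear_combination hpde (x₀ + t * c) t (Ico_subset_Icc_self ht)

theorem burgers_monotone_characteristic_position (hT : 0 ≤ T) :
    Monotone fun x => x + T * u x 0 := by
  intro x₁ x₂ hx
  by_contra! hcross
  set c₁ := u x₁ 0
  set c₂ := u x₂ 0
  have hc : c₂ < c₁ := by nlinarith
  set t₀ := (x₂ - x₁) / (c₁ - c₂)
  have ht₀ : t₀ ∈ Icc 0 T :=
    ⟨div_nonneg (sub_nonneg.2 hx) (sub_pos.2 hc).le,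
      (div_le_iff₀ (sub_pos.2 hc)).2 (by linarith)⟩
  have hmeet : x₁ + t₀ * c₁ = x₂ + t₀ * c₂ := by
    linarith [div_mul_cancel₀ (x₂ - x₁) (sub_pos.2 hc).ne']
  have h₁ := burgers_const_along_characteristic hu hpde x₁ t₀ ht₀
  have h₂ := burgers_const_along_characteristic hu hpde x₂ t₀ ht₀
  rw [hmeet] at h₁
  exact hc.ne (h₂.symm.trans h₁)

end Burgers

theorem burgers_blowup_time_general (u₀ : ℝ → ℝ)
    (m : ℝ) (hm : 0 < m)
    (hatt : ∃ x, deriv u₀ x = -m)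
    (T : ℝ) (hT : 0 < T) (u : ℝ → ℝ → ℝ)
    (hu : ContDiff ℝ 1 (fun p : ℝ × ℝ => u p.1 p.2))
    (hpde : ∀ x : ℝ, ∀ t ∈ Set.Icc (0 : ℝ) T,
      deriv (fun s => u x s) t + u x t * deriv (fun y => u y t) x = 0)
    (hinit : ∀ x, u x 0 = u₀ x) :
    T ≤ 1 / m := by
  obtain ⟨x₀, hx₀⟩ := hatt
  have hd : HasDerivAt u₀ (-m) x₀ :=
    hx₀ ▸ (differentiableAt_of_deriv_ne_zero (by linarith : deriv u₀ x₀ ≠ 0)).hasDerivAt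
  have hmono : Monotone fun x => x + T * u₀ x := by
    simpa only [hinit] using burgers_monotone_characteristic_position hu hpde hT.le
  have hslope : 0 ≤ 1 + T * -m :=
    ((hasDerivAt_id x₀).add (hd.const_mul T)).deriv ▸ hmono.deriv_nonneg
  rw [le_div_iff₀ hm]
  linarith

/-- Finite-time breakdown for the inviscid Burgers' equation: if the initial
derivative has infimum `-m < 0` which is attained, then any `C¹` solution on
`ℝ × [0, T]` satisfies `T ≤ 1/m`. -/
theorem burgers_blowup_time (u₀ : ℝ → ℝ) (hu₀ : ContDiff ℝ 1 u₀)
    (m : ℝ) (hm : 0 < m)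
    (hinf : ∀ x, -m ≤ deriv u₀ x)
    (hatt : ∃ x, deriv u₀ x = -m)
    (T : ℝ) (hT : 0 < T) (u : ℝ → ℝ → ℝ)
    (hu : ContDiff ℝ 1 (fun p : ℝ × ℝ => u p.1 p.2))
    (hpde : ∀ x : ℝ, ∀ t ∈ Set.Icc (0 : ℝ) T,
      deriv (fun s => u x s) t + u x t * deriv (fun y => u y t) x = 0)
    (hinit : ∀ x, u x 0 = u₀ x) :
    T ≤ 1 / m :=
  burgers_blowup_time_general u₀ m hm hatt T hT u hu hpde hinit
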